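/- Let E = {1,...,n}, let f be harmonic of degree d with extension f̃, and let C ⊆ F_q^n be a linear code. Define Z_{C,f}^{[m]}(x,y) = ∑_{X ⊆ E, d ≤ |X| ≤ n−d} f̃(X) A_C^{[m]}(X) x^{|E−X|−d} y^{|X|−d}. Then Z_{C,f}^{[m]}(x,y) = (−1)^d ∑_{X ⊆ E, d ≤ |X| ≤ n−d} f̃(X) q^{m(α_C(E) − α_C(X))} (x−y)^{|X|−d} y^{|E−X|−d}, where α_C(X) = log_q |C\(E−X)|. -/

import Mathlib

open Finset

variable {ι F : Type*} [Fintype ι] [DecidableEq ι] [Field F] [Fintype F] [DecidableEq F]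

/-- `f` is harmonic of degree `d`. -/
def IsHarmonic (d : ℕ) (f : Finset ι → ℝ) : Prop :=
  ∀ Y : Finset ι, Y.card + 1 = d →
    ∑ Z ∈ Finset.univ.filter (fun Z : Finset ι => Z.card = d ∧ Y ⊆ Z), f Z = 0

/-- The extension `f̃(X) = ∑_{Z ⊆ X, |Z| = d} f(Z)`. -/
def tilde (d : ℕ) (f : Finset ι → ℝ) (X : Finset ι) : ℝ :=
  ∑ Z ∈ X.powerset.filter (fun Z : Finset ι => Z.card = d), f Z

/-- Projection of `F^ι` onto the coordinates in `X`. -/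
def proj (F : Type*) [Field F] (X : Finset ι) : (ι → F) →ₗ[F] ({i // i ∈ X} → F) :=
  LinearMap.funLeft F F (fun i => i.1)

/-- The support of a vector. -/
def supp (v : ι → F) : Finset ι := Finset.univ.filter (fun i => v i ≠ 0)

/-- `A_C^{[m]}(X)`: the number of `m`-tuples of codewords whose supports union to `X`. -/
noncomputable def Acount (C : Submodule F (ι → F)) (m : ℕ) (X : Finset ι) : ℕ :=
  Nat.card {u : Fin m → C // (Finset.univ.biUnion fun j => supp ((u j : ι → F))) = X}

/-- `Z_{C,f}^{[m]}(x,y) = ∑_{X, d ≤ |X| ≤ n-d} f̃(X) A_C^{[m]}(X) x^{|E-X|-d} y^{|X|-d}`. -/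
noncomputable def Zcode (C : Submodule F (ι → F)) (m d : ℕ) (f : Finset ι → ℝ)
    (x y : ℝ) : ℝ :=
  ∑ X ∈ Finset.univ.filter
      (fun X : Finset ι => d ≤ X.card ∧ X.card ≤ Fintype.card ι - d),
    tilde d f X * (Acount C m X : ℝ) * x ^ (Xᶜ.card - d) * y ^ (X.card - d)

/-- `α_C(X) = log_q |C \ (E - X)|`, the log-size of the projection of `C` onto `X`. -/
noncomputable def alphaC (C : Submodule F (ι → F)) (q : ℕ) (X : Finset ι) : ℝ :=
  Real.logb q (Nat.card (C.map (proj F X)))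

/-!
The codewords supported in `E − X` form the kernel of the projection of `C` onto `X`, so
`q^{m(α_C(E) − α_C(X))}` counts the `m`-tuples of codewords supported in `E − X`, i.e. equals
`∑_{Y ⊆ E−X} A_C^{[m]}(Y)`. Exchanging the summations, the right-hand side becomes
`(−1)^d ∑_Y A_C^{[m]}(Y) ∑_{X ⊆ E−Y} f̃(X) (x−y)^{|X|−d} y^{|E−X|−d}`. Expanding `f̃(X)` as a sum
over `d`-sets `Z ⊆ X` and summing over the interval `Z ⊆ X ⊆ E − Y`, the binomial theorem
collapses the inner sum to `f̃(E−Y) x^{|E−Y|−d} y^{|Y|−d}`. Finally harmonicity gives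
`f̃(E−Y) = (−1)^d f̃(Y)`: by induction, the sum of `f` over the `d`-supersets of any set of size
`< d` vanishes, and inclusion–exclusion over the subsets of `Y` then evaluates `f̃(E−Y)`.
-/

lemma Finset.sum_Icc_card {α M : Type*} [DecidableEq α] [AddCommMonoid M] {Z T : Finset α}
    (h : Z ⊆ T) (g : ℕ → M) :
    ∑ X ∈ Icc Z T, g X.card
      = ∑ j ∈ range (T.card - Z.card + 1), (T.card - Z.card).choose j • g (Z.card + j) := by
  have hinj : Set.InjOn (Z ∪ ·) ((T \ Z).powerset : Set (Finset α)) := fun V hV W hW hVW => by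
    simp only [coe_powerset, Set.mem_preimage, Set.mem_powerset_iff, coe_subset] at hV hW
    rw [← union_sdiff_cancel_left (disjoint_of_subset_right hV disjoint_sdiff),
      ← union_sdiff_cancel_left (disjoint_of_subset_right hW disjoint_sdiff)]
    exact congrArg (· \ Z) hVW
  rw [Icc_eq_image_powerset h, sum_image hinj, ← card_sdiff_of_subset h,
    ← sum_powerset_apply_card (fun k => g (Z.card + k))]
  refine sum_congr rfl fun V hV => ?_
  rw [card_union_of_disjoint (disjoint_of_subset_right (mem_powerset.1 hV) disjoint_sdiff)]

def supersetSum (d : ℕ) (f : Finset ι → ℝ) (W : Finset ι) : ℝ :=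
  ∑ Z ∈ univ.filter (fun Z : Finset ι => Z.card = d ∧ W ⊆ Z), f Z

lemma card_filter_Icc_card_succ {α : Type*} [DecidableEq α] {W Z : Finset α} (h : W ⊆ Z) :
    ((Icc W Z).filter (fun Y => Y.card = W.card + 1)).card = Z.card - W.card := by
  rw [card_filter, sum_Icc_card h (fun k => if k = W.card + 1 then 1 else 0)]
  rcases Nat.eq_zero_or_pos (Z.card - W.card) with h0 | hpos
  · simp [h0]
  · rw [sum_eq_single 1 (fun j _ hj => by simp [hj]) (fun h1 => by simp at h1; omega)]
    simp

lemma sum_supersetSum_card_succ (d : ℕ) (f : Finset ι → ℝ) (W : Finset ι) :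
    ∑ Y ∈ univ.filter (fun Y : Finset ι => Y.card = W.card + 1 ∧ W ⊆ Y), supersetSum d f Y
      = ((d - W.card : ℕ) : ℝ) * supersetSum d f W := by
  unfold supersetSum
  rw [sum_comm' (t' := univ.filter (fun Z : Finset ι => Z.card = d ∧ W ⊆ Z))
    (s' := fun Z => (Icc W Z).filter (fun Y => Y.card = W.card + 1)), mul_sum]
  · refine sum_congr rfl fun Z hZ => ?_
    obtain ⟨hZd, hWZ⟩ := (mem_filter.1 hZ).2
    rw [sum_const, card_filter_Icc_card_succ hWZ, hZd, nsmul_eq_mul]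
  · intro Y Z
    simp only [mem_filter, mem_univ, true_and, mem_Icc]
    constructor
    · rintro ⟨⟨hY, hWY⟩, hZ, hYZ⟩
      exact ⟨⟨⟨hWY, hYZ⟩, hY⟩, hZ, hWY.trans hYZ⟩
    · rintro ⟨⟨⟨hWY, hYZ⟩, hY⟩, hZ, _⟩
      exact ⟨⟨hY, hWY⟩, hZ, hYZ⟩

lemma IsHarmonic.supersetSum_eq_zero {d : ℕ} {f : Finset ι → ℝ} (hf : IsHarmonic d f)
    {W : Finset ι} (hW : W.card < d) : supersetSum d f W = 0 := by
  obtain ⟨k, hk⟩ : ∃ k, W.card + (k + 1) = d := ⟨d - W.card - 1, by omega⟩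
  induction k generalizing W with
  | zero => exact hf W hk
  | succ k ih =>
    have hsum := sum_supersetSum_card_succ d f W
    rw [sum_eq_zero fun Y hY => ih (by simp at hY; omega) (by simp at hY; omega)] at hsum
    exact (mul_eq_zero.1 hsum.symm).resolve_left (by norm_cast; omega)

lemma IsHarmonic.supersetSum_eq {d : ℕ} {f : Finset ι → ℝ} (hf : IsHarmonic d f)
    (W : Finset ι) : supersetSum d f W = if W.card = d then f W else 0 := by
  rcases lt_trichotomy W.card d with h | h | h
  · rw [hf.supersetSum_eq_zero h, if_neg h.ne]
  · rw [if_pos h, supersetSum, sum_eq_single_of_mem W (by simp [h]) fun Z hZ hZW => ?_]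
    simp only [mem_filter, mem_univ, true_and] at hZ
    exact absurd (eq_of_subset_of_card_le hZ.2 (by omega)).symm hZW
  · rw [if_neg h.ne', supersetSum, sum_eq_zero fun Z hZ => ?_]
    simp only [mem_filter, mem_univ, true_and] at hZ
    exact absurd (card_le_card hZ.2) (by omega)

lemma tilde_eq_zero_of_card_lt {α : Type*} {d : ℕ} (f : Finset α → ℝ) {X : Finset α}
    (h : X.card < d) : tilde d f X = 0 :=
  sum_eq_zero fun Z hZ => by
    simp only [mem_filter, mem_powerset] at hZ
    exact absurd (card_le_card hZ.1) (by omega)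

lemma IsHarmonic.tilde_compl {d : ℕ} {f : Finset ι → ℝ} (hf : IsHarmonic d f) (T : Finset ι) :
    tilde d f Tᶜ = (-1 : ℝ) ^ d * tilde d f T := by
  have hW : ∑ W ∈ T.powerset, (-1 : ℝ) ^ W.card * supersetSum d f W
      = (-1 : ℝ) ^ d * tilde d f T := by
    simp only [hf.supersetSum_eq, mul_ite, mul_zero, ← sum_filter, tilde, mul_sum]
    exact sum_congr rfl fun W hW => by rw [(mem_filter.1 hW).2]
  have hZ : ∑ W ∈ T.powerset, (-1 : ℝ) ^ W.card * supersetSum d f W = tilde d f Tᶜ := by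
    simp only [supersetSum, mul_sum]
    rw [sum_comm' (t' := univ.filter (fun Z : Finset ι => Z.card = d))
      (s' := fun Z => (T ∩ Z).powerset)]
    · have halt : ∀ S : Finset ι, ∑ W ∈ S.powerset, (-1 : ℝ) ^ W.card = if S = ∅ then 1 else 0 :=
        fun S => by exact_mod_cast sum_powerset_neg_one_pow_card
      simp only [← sum_mul, halt, ite_mul, one_mul, zero_mul, ← sum_filter, tilde, filter_filter]
      refine sum_congr (ext fun Z => ?_) fun _ _ => rfl
      simp only [mem_filter, mem_univ, true_and, mem_powerset, subset_compl_iff_disjoint_left,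
        disjoint_iff_inter_eq_empty]
      tauto
    · intro W Z
      simp only [mem_filter, mem_univ, true_and, mem_powerset, subset_inter_iff]
      tauto
  rw [← hZ, hW]

lemma IsHarmonic.tilde_eq_zero {d : ℕ} {f : Finset ι → ℝ} (hf : IsHarmonic d f) {X : Finset ι}
    (h : ¬(d ≤ X.card ∧ X.card ≤ Fintype.card ι - d)) : tilde d f X = 0 := by
  rcases not_and_or.1 h with h | h
  · exact tilde_eq_zero_of_card_lt f (not_le.1 h)
  · have hXc : Xᶜ.card < d := by
      have := card_le_univ X
      rw [card_compl]
      omega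
    simpa [tilde_eq_zero_of_card_lt f hXc] using hf.tilde_compl Xᶜ

lemma sum_powerset_tilde_mul {α : Type*} [DecidableEq α] (d : ℕ) (f : Finset α → ℝ)
    (T : Finset α) (g : ℕ → ℝ) :
    ∑ X ∈ T.powerset, tilde d f X * g X.card
      = tilde d f T * ∑ j ∈ range (T.card - d + 1), ((T.card - d).choose j : ℝ) * g (d + j) := by
  simp only [tilde, sum_mul]
  rw [sum_comm' (t' := T.powerset.filter (fun Z : Finset α => Z.card = d))
    (s' := fun Z => Icc Z T)]
  · refine sum_congr rfl fun Z hZ => ?_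
    obtain ⟨hZT, hZd⟩ := mem_filter.1 hZ
    rw [← mul_sum, sum_Icc_card (mem_powerset.1 hZT), hZd]
    simp only [nsmul_eq_mul]
  · intro X Z
    simp only [mem_filter, mem_powerset, mem_Icc]
    constructor
    · rintro ⟨hXT, hZX, hZ⟩
      exact ⟨⟨hZX, hXT⟩, hZX.trans hXT, hZ⟩
    · rintro ⟨⟨hZX, hXT⟩, -, hZ⟩
      exact ⟨hXT, hZX, hZ⟩

lemma IsHarmonic.sum_powerset_tilde_mul_pow {d : ℕ} {f : Finset ι → ℝ} (hf : IsHarmonic d f)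
    (T : Finset ι) (x y : ℝ) :
    ∑ X ∈ T.powerset, tilde d f X * ((x - y) ^ (X.card - d) * y ^ (Xᶜ.card - d))
      = tilde d f T * (x ^ (T.card - d) * y ^ (Tᶜ.card - d)) := by
  set n := Fintype.card ι
  simp only [card_compl]
  rw [sum_powerset_tilde_mul d f T fun i => (x - y) ^ (i - d) * y ^ (n - i - d)]
  -- the truncated exponents split only for `d ≤ |T| ≤ n - d`, and elsewhere `tilde d f T = 0`
  by_cases hT : tilde d f T = 0
  · simp [hT]
  obtain ⟨hdT, hTn⟩ := not_not.1 (mt hf.tilde_eq_zero hT)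
  have hterm : ∀ j ∈ range (T.card - d + 1),
      ((T.card - d).choose j : ℝ) * ((x - y) ^ (d + j - d) * y ^ (n - (d + j) - d))
        = (x - y) ^ j * y ^ (T.card - d - j) * (T.card - d).choose j * y ^ (n - T.card - d) := by
    intro j hj
    rw [mem_range] at hj
    rw [Nat.add_sub_cancel_left,
      show n - (d + j) - d = (T.card - d - j) + (n - T.card - d) by omega, pow_add]
    ring
  rw [sum_congr rfl hterm, ← sum_mul, ← add_pow, sub_add_cancel]

lemma IsHarmonic.sum_filter_tilde_mul {d : ℕ} {f : Finset ι → ℝ} (hf : IsHarmonic d f)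
    (g : Finset ι → ℝ) :
    ∑ X ∈ univ.filter (fun X : Finset ι => d ≤ X.card ∧ X.card ≤ Fintype.card ι - d),
      tilde d f X * g X = ∑ X, tilde d f X * g X :=
  sum_subset (subset_univ _) fun X _ hX => by
    rw [hf.tilde_eq_zero (by simpa using hX), zero_mul]

lemma proj_eq_zero_iff {ι F : Type*} [Fintype ι] [DecidableEq ι] [Field F] [DecidableEq F]
    (X : Finset ι) (v : ι → F) : proj F X v = 0 ↔ supp v ⊆ Xᶜ := by
  simp only [proj, LinearMap.funLeft_apply, funext_iff, Pi.zero_apply, Subtype.forall, supp,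
    subset_iff, mem_filter, mem_univ, true_and, mem_compl]
  exact forall_congr' fun i =>
    ⟨fun h hv hi => hv (h hi), fun h hi => not_not.1 (mt h (not_not.2 hi))⟩

lemma card_eq_card_supp_subset_mul_card_map_proj {ι F : Type*} [Fintype ι] [DecidableEq ι]
    [Field F] [DecidableEq F] (C : Submodule F (ι → F)) (X : Finset ι) :
    Nat.card C = Nat.card {c : C // supp (c : ι → F) ⊆ Xᶜ} * Nat.card (C.map (proj F X)) := by
  set g := (proj F X).comp C.subtype
  have hker : Nat.card (LinearMap.ker g) = Nat.card {c : C // supp (c : ι → F) ⊆ Xᶜ} :=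
    Nat.card_congr (Equiv.subtypeEquivRight fun c => proj_eq_zero_iff X (c : ι → F))
  have hrange : LinearMap.range g = C.map (proj F X) := by
    rw [LinearMap.range_comp, Submodule.range_subtype]
  rw [Submodule.card_eq_card_quotient_mul_card (LinearMap.ker g), hker,
    Nat.card_congr g.quotKerEquivRange.toEquiv, hrange, mul_comm]

lemma card_map_proj_univ {ι F : Type*} [Fintype ι] [Field F] (C : Submodule F (ι → F)) :
    Nat.card (C.map (proj F (univ : Finset ι))) = Nat.card C :=
  (Nat.card_congr (Submodule.equivMapOfInjective _
    (LinearMap.funLeft_injective_of_surjective F F _ fun i => ⟨⟨i, mem_univ i⟩, rfl⟩)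
    C).toEquiv).symm

lemma sum_powerset_Acount (C : Submodule F (ι → F)) (m : ℕ) (S : Finset ι) :
    ∑ Y ∈ S.powerset, Acount C m Y = Nat.card {c : C // supp (c : ι → F) ⊆ S} ^ m := by
  have : Fintype C := Fintype.ofFinite C
  let U : (Fin m → C) → Finset ι := fun u => univ.biUnion fun j => supp (u j : ι → F)
  have hpi : {u : Fin m → C // U u ⊆ S} ≃ (Fin m → {c : C // supp (c : ι → F) ⊆ S}) :=
    (Equiv.subtypeEquivRight fun u => by simp [U]).trans
      (Equiv.subtypePiEquivPi (p := fun _ c => supp ((c : C) : ι → F) ⊆ S))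
  calc ∑ Y ∈ S.powerset, Acount C m Y = #(univ.filter fun u => U u ⊆ S) := by
        rw [card_eq_sum_card_fiberwise (f := U) (t := S.powerset) fun u hu => by simpa using hu]
        refine sum_congr rfl fun Y hY => ?_
        rw [Acount, Nat.card_eq_fintype_card, Fintype.card_subtype, filter_filter]
        congr 1
        ext u
        simp only [mem_filter, mem_univ, true_and]
        exact ⟨fun h => ⟨h.le.trans (mem_powerset.1 hY), h⟩, And.right⟩
    _ = Nat.card {u // U u ⊆ S} := by rw [Nat.card_eq_fintype_card, Fintype.card_subtype]
    _ = _ := by rw [Nat.card_congr hpi, Nat.card_fun, Nat.card_fin]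

lemma rpow_mul_sub_alphaC_eq_sum_Acount {q : ℕ} (hq : Fintype.card F = q)
    (C : Submodule F (ι → F)) (m : ℕ) (X : Finset ι) :
    (q : ℝ) ^ ((m : ℝ) * (alphaC C q univ - alphaC C q X))
      = ∑ Y ∈ Xᶜ.powerset, (Acount C m Y : ℝ) := by
  set K := Nat.card {c : C // supp (c : ι → F) ⊆ Xᶜ}
  have : Nonempty {c : C // supp (c : ι → F) ⊆ Xᶜ} := ⟨⟨0, by simp [supp]⟩⟩
  have hK : 0 < K := Nat.card_pos
  have hb : 0 < Nat.card (C.map (proj F X)) := Nat.card_pos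
  have hq1 : 1 < (q : ℝ) := by exact_mod_cast hq ▸ Fintype.one_lt_card
  have halpha : alphaC C q univ - alphaC C q X = Real.logb q K := by
    rw [alphaC, alphaC, card_map_proj_univ, card_eq_card_supp_subset_mul_card_map_proj C X,
      Nat.cast_mul, Real.logb_mul (by positivity) (by positivity), add_sub_cancel_right]
  rw [halpha, ← Real.logb_pow, Real.rpow_logb (by positivity) hq1.ne' (by positivity),
    ← Nat.cast_sum, sum_powerset_Acount, Nat.cast_pow]

/-- `Z_{C,f}^{[m]}(x,y) = (-1)^d ∑_{X, d ≤ |X| ≤ n-d} f̃(X) q^{m(α_C(E)-α_C(X))}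
(x-y)^{|X|-d} y^{|E-X|-d}`. -/
theorem stmt_15 (q : ℕ) (hq : Fintype.card F = q) (C : Submodule F (ι → F))
    (m d : ℕ) (f : Finset ι → ℝ) (hf : IsHarmonic d f) (x y : ℝ) :
    Zcode C m d f x y
      = (-1 : ℝ) ^ d *
          ∑ X ∈ Finset.univ.filter
              (fun X : Finset ι => d ≤ X.card ∧ X.card ≤ Fintype.card ι - d),
            tilde d f X *
              ((q : ℝ) ^ ((m : ℝ) * (alphaC C q Finset.univ - alphaC C q X))) *
              (x - y) ^ (X.card - d) * y ^ (Xᶜ.card - d) := by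
  have hsign : (-1 : ℝ) ^ d * (-1 : ℝ) ^ d = 1 := by rw [← mul_pow]; norm_num
  calc Zcode C m d f x y
      = ∑ Y, tilde d f Y * (Acount C m Y * (x ^ (Yᶜ.card - d) * y ^ (Y.card - d))) := by
        simp only [Zcode, mul_assoc, hf.sum_filter_tilde_mul]
    _ = (-1 : ℝ) ^ d * ∑ Y, Acount C m Y *
          (tilde d f Yᶜ * (x ^ (Yᶜ.card - d) * y ^ (Yᶜᶜ.card - d))) := by
        simp only [mul_sum, hf.tilde_compl, compl_compl]
        refine sum_congr rfl fun Y _ => ?_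
        linear_combination (-tilde d f Y * Acount C m Y * x ^ (Yᶜ.card - d) * y ^ (Y.card - d))
          * hsign
    _ = (-1 : ℝ) ^ d * ∑ Y, ∑ X ∈ Yᶜ.powerset, (Acount C m Y : ℝ) *
          (tilde d f X * ((x - y) ^ (X.card - d) * y ^ (Xᶜ.card - d))) := by
        simp only [← mul_sum, hf.sum_powerset_tilde_mul_pow]
    _ = (-1 : ℝ) ^ d * ∑ X, ∑ Y ∈ Xᶜ.powerset, (Acount C m Y : ℝ) *
          (tilde d f X * ((x - y) ^ (X.card - d) * y ^ (Xᶜ.card - d))) := by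
        rw [sum_comm' (s' := fun X => Xᶜ.powerset) (t' := univ)
          fun Y X => by simp [subset_compl_comm]]
    _ = (-1 : ℝ) ^ d * ∑ X, tilde d f X * ((∑ Y ∈ Xᶜ.powerset, (Acount C m Y : ℝ)) *
          ((x - y) ^ (X.card - d) * y ^ (Xᶜ.card - d))) := by
        congr 1
        refine sum_congr rfl fun X _ => ?_
        rw [sum_mul, mul_sum]
        exact sum_congr rfl fun Y _ => by ring
    _ = _ := by
        rw [← hf.sum_filter_tilde_mul]
        simp only [mul_assoc, rpow_mul_sub_alphaC_eq_sum_Acount hq]
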